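/- Let D : ℕ × ℕ → ℤ be the Delannoy numbers and for n ∈ ℕ let V(n) be the (n+1) × (n+1) integer matrix with V(n)_{i,j} = D(i, j) for 0 ≤ i, j ≤ n. Then V(n) = B(n+1) * V'(n) * B(n+1)ᵀ, where B(n+1) is the (n+1) × (n+1) binomial matrix with entries C(i, j) and V'(n) is the diagonal matrix with diagonal entries V'(n)_{k,k} = 2^k for 0 ≤ k ≤ n. Consequently coker V(n) ≅ ⊕_{k=0}^{n} ℤ/2^k ℤ and |det V(n)| = 2^{n(n+1)/2}. -/
import Mathlib
open Matrix Finset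

private lemma delannoy_key (i j M : ℕ) (hi : i < M) :
    ∑ k ∈ range (M+1), ((i+1).choose k : ℤ) * (j+1).choose k * 2^k
      = ∑ k ∈ range (M+1), ((i+1).choose k : ℤ) * j.choose k * 2^k
      + ∑ k ∈ range (M+1), (i.choose k : ℤ) * (j+1).choose k * 2^k
      + ∑ k ∈ range (M+1), (i.choose k : ℤ) * j.choose k * 2^k := by
  rw [Finset.sum_range_succ' (fun k => ((i+1).choose k : ℤ) * (j+1).choose k * 2^k),
      Finset.sum_range_succ' (fun k => ((i+1).choose k : ℤ) * j.choose k * 2^k),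
      Finset.sum_range_succ' (fun k => (i.choose k : ℤ) * (j+1).choose k * 2^k),
      Finset.sum_range_succ' (fun k => (i.choose k : ℤ) * j.choose k * 2^k)]
  simp only [Nat.choose_zero_right, Nat.cast_one, one_mul, pow_zero, mul_one]
  set h : ℕ → ℤ := fun k => 2 * ((i.choose k : ℤ) * j.choose k * 2^k) with hh
  have step : ∀ k ∈ range M,
      ((i+1).choose (k+1) : ℤ) * (j+1).choose (k+1) * 2^(k+1)
        = (((i+1).choose (k+1) : ℤ) * j.choose (k+1) * 2^(k+1)
          + (i.choose (k+1) : ℤ) * (j+1).choose (k+1) * 2^(k+1)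
          + (i.choose (k+1) : ℤ) * j.choose (k+1) * 2^(k+1))
          + (h k - h (k+1)) := by
    intro k _
    have p1 : ((i+1).choose (k+1) : ℤ) = i.choose k + i.choose (k+1) := by
      exact_mod_cast congrArg (Nat.cast (R := ℤ)) (Nat.choose_succ_succ i k)
    have p2 : ((j+1).choose (k+1) : ℤ) = j.choose k + j.choose (k+1) := by
      exact_mod_cast congrArg (Nat.cast (R := ℤ)) (Nat.choose_succ_succ j k)
    rw [p1, p2, hh]
    ring
  rw [Finset.sum_congr rfl step, Finset.sum_add_distrib, Finset.sum_add_distrib,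
      Finset.sum_add_distrib, Finset.sum_range_sub']
  have h0 : h 0 = 2 := by simp [hh]
  have hM : h M = 0 := by
    simp [hh, Nat.choose_eq_zero_of_lt hi]
  rw [h0, hM]
  ring

private lemma delannoy_formula (D : ℕ → ℕ → ℤ)
    (hD0 : ∀ i, D i 0 = 1) (hD0' : ∀ j, D 0 j = 1)
    (hDrec : ∀ i j, D (i + 1) (j + 1) = D (i + 1) j + D i (j + 1) + D i j) (M : ℕ) :
    ∀ i, i ≤ M → ∀ j, D i j = ∑ k ∈ range (M+1), (i.choose k : ℤ) * j.choose k * 2^k := by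
  intro i
  induction i with
  | zero =>
    intro _ j
    rw [Finset.sum_range_succ' (fun k => ((0:ℕ).choose k : ℤ) * j.choose k * 2^k)]
    simp [hD0' j]
  | succ i IH =>
    intro hi j
    induction j with
    | zero =>
      rw [Finset.sum_range_succ' (fun k => ((i+1).choose k : ℤ) * (0:ℕ).choose k * 2^k)]
      simp [hD0]
    | succ j IHj =>
      rw [hDrec i j, IHj, IH (by omega) (j+1), IH (by omega) j,
        delannoy_key i j M (by omega)]

/-- The `m × m` lower-triangular binomial matrix, `B(m)ᵢⱼ = C(i, j)`. -/
def binomMat (m : ℕ) : Matrix (Fin m) (Fin m) ℤ :=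
  Matrix.of fun i j => (Nat.choose (i : ℕ) (j : ℕ) : ℤ)

private lemma binomMat_det (m : ℕ) : (binomMat m).det = 1 := by
  rw [Matrix.det_of_lowerTriangular]
  · simp [binomMat, Matrix.of_apply]
  · intro i j hij
    simp only [binomMat, Matrix.of_apply]
    exact_mod_cast congrArg (Nat.cast (R := ℤ)) (Nat.choose_eq_zero_of_lt hij)

private lemma diag_range (m : ℕ) (d : Fin m → ℤ) :
    LinearMap.range (Matrix.diagonal d).mulVecLin
      = Submodule.pi Set.univ (fun k => Submodule.span ℤ {d k}) := by
  ext v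
  simp only [LinearMap.mem_range, Submodule.mem_pi, Set.mem_univ, forall_true_left,
    Submodule.mem_span_singleton]
  constructor
  · rintro ⟨x, rfl⟩ k
    exact ⟨x k, by simp [Matrix.mulVecLin_apply, Matrix.mulVec_diagonal, mul_comm]⟩
  · intro h
    choose c hc using h
    exact ⟨c, funext fun k => by simp [Matrix.mulVecLin_apply, Matrix.mulVec_diagonal,
      mul_comm, ← hc k, smul_eq_mul]⟩

private noncomputable def zmodEquiv (k : ℕ) :
    (ℤ ⧸ Submodule.span ℤ {(2:ℤ)^k}) ≃ₗ[ℤ] ZMod (2^k) := by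
  have h : (Ideal.span {((2^k : ℕ) : ℤ)} : Submodule ℤ ℤ) = Submodule.span ℤ {(2:ℤ)^k} := by
    push_cast; rfl
  exact h ▸ (Int.quotientSpanNatEquivZMod (2^k)).toAddEquiv.toIntLinearEquiv

private noncomputable def cokerTransport (m : ℕ) (B Dd : Matrix (Fin m) (Fin m) ℤ)
    (hB : IsUnit B.det) :
    ((Fin m → ℤ) ⧸ LinearMap.range (B * Dd * Bᵀ).mulVecLin) ≃ₗ[ℤ]
      ((Fin m → ℤ) ⧸ LinearMap.range Dd.mulVecLin) := by
  have hBi : Invertible B := B.invertibleOfIsUnitDet hB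
  have hBt : Invertible Bᵀ := (Matrix.transposeInvertibleEquivInvertible B).symm hBi
  let eB : (Fin m → ℤ) ≃ₗ[ℤ] (Fin m → ℤ) :=
    LinearEquiv.ofLinear B.mulVecLin (⅟B).mulVecLin
      (by rw [← Matrix.mulVecLin_mul, mul_invOf_self, Matrix.mulVecLin_one])
      (by rw [← Matrix.mulVecLin_mul, invOf_mul_self, Matrix.mulVecLin_one])
  have hsurj : Function.Surjective Bᵀ.mulVecLin := by
    intro y
    exact ⟨(⅟(Bᵀ)).mulVec y, by
      simp only [Matrix.mulVecLin_apply, Matrix.mulVec_mulVec, mul_invOf_self,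
        Matrix.one_mulVec]⟩
  have hrange : Submodule.map (eB : (Fin m → ℤ) →ₗ[ℤ] (Fin m → ℤ))
      (LinearMap.range Dd.mulVecLin) = LinearMap.range (B * Dd * Bᵀ).mulVecLin := by
    rw [Matrix.mulVecLin_mul, Matrix.mulVecLin_mul, LinearMap.range_comp,
      LinearMap.range_eq_top.mpr hsurj, Submodule.map_top, LinearMap.range_comp]
    rfl
  exact (Submodule.Quotient.equiv _ _ eB hrange).symm

/-- **Smith normal form of the Delannoy matrix.** Let `D` satisfy the Delannoy
recurrence and let `V(n)ᵢⱼ = D(i, j)` for `0 ≤ i, j ≤ n`.  Then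
`V(n) = B(n+1) * diag(1, 2, 4, …, 2ⁿ) * B(n+1)ᵀ`; consequently
`coker V(n) ≅ ⊕ₖ ℤ/2ᵏℤ` for `0 ≤ k ≤ n`, and `|det V(n)| = 2^(n(n+1)/2)`. -/
theorem delannoy_matrix_smith_normal_form (D : ℕ → ℕ → ℤ)
    (hD0 : ∀ i, D i 0 = 1) (hD0' : ∀ j, D 0 j = 1)
    (hDrec : ∀ i j, D (i + 1) (j + 1) = D (i + 1) j + D i (j + 1) + D i j) (n : ℕ) :
    (Matrix.of fun i j : Fin (n + 1) => D (i : ℕ) (j : ℕ)) =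
      binomMat (n + 1) *
        Matrix.diagonal (fun k : Fin (n + 1) => (2 : ℤ) ^ (k : ℕ)) *
        (binomMat (n + 1))ᵀ ∧
    Nonempty (((Fin (n + 1) → ℤ) ⧸
        LinearMap.range (Matrix.of fun i j : Fin (n + 1) =>
          D (i : ℕ) (j : ℕ)).mulVecLin) ≃ₗ[ℤ]
      ((k : Fin (n + 1)) → ZMod (2 ^ (k : ℕ)))) ∧
    ((Matrix.of fun i j : Fin (n + 1) => D (i : ℕ) (j : ℕ)).det).natAbs =
      2 ^ (n * (n + 1) / 2) := by
  set d : Fin (n+1) → ℤ := fun k => (2 : ℤ) ^ (k : ℕ) with hd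
  have hmain : (Matrix.of fun i j : Fin (n + 1) => D (i : ℕ) (j : ℕ)) =
      binomMat (n + 1) * Matrix.diagonal d * (binomMat (n + 1))ᵀ := by
    ext i j
    have hform := delannoy_formula D hD0 hD0' hDrec n i (Nat.lt_succ_iff.mp i.isLt) j
    have hrhs : (binomMat (n + 1) * Matrix.diagonal d * (binomMat (n + 1))ᵀ) i j
        = ∑ k : Fin (n+1), ((i:ℕ).choose (k:ℕ) : ℤ) * ((j:ℕ).choose (k:ℕ) : ℤ) * 2^(k:ℕ) := by
      rw [Matrix.mul_apply]
      simp only [Matrix.mul_diagonal, Matrix.transpose_apply, binomMat, Matrix.of_apply, hd]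
      exact Finset.sum_congr rfl fun k _ => by ring
    rw [Matrix.of_apply, hform, hrhs,
      Fin.sum_univ_eq_sum_range (fun k => ((i:ℕ).choose k : ℤ) * ((j:ℕ).choose k : ℤ) * 2^k)]
  refine ⟨hmain, ?_, ?_⟩
  · rw [hmain]
    have hB : IsUnit (binomMat (n+1)).det := by rw [binomMat_det]; exact isUnit_one
    have e1 := cokerTransport (n+1) (binomMat (n+1)) (Matrix.diagonal d) hB
    have e2 : ((Fin (n+1) → ℤ) ⧸ LinearMap.range (Matrix.diagonal d).mulVecLin) ≃ₗ[ℤ]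
        ((k : Fin (n+1)) → ℤ ⧸ Submodule.span ℤ {d k}) := by
      rw [diag_range]
      exact Submodule.quotientPi _
    exact ⟨e1.trans (e2.trans (LinearEquiv.piCongrRight fun k => zmodEquiv (k : ℕ)))⟩
  · rw [hmain, Matrix.det_mul, Matrix.det_mul, Matrix.det_transpose, binomMat_det,
      Matrix.det_diagonal, one_mul, mul_one, hd]
    rw [Finset.prod_pow_eq_pow_sum]
    have hsum : ∑ k : Fin (n+1), (k : ℕ) = n * (n + 1) / 2 := by
      rw [Fin.sum_univ_eq_sum_range (fun k => k), Finset.sum_range_id]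
      simp [Nat.mul_comm]
    rw [hsum]
    simp [Int.natAbs_pow]
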